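/- arXiv:1912.07761 — 2 statements merged into one kernel-verified Lean document; each statement's English description precedes it below -/
import Mathlib

section
/- For all vectors x, y in ℝ^p with y ≠ 0, the inequality ‖x‖₂ ≤ ‖y‖₂ + ⟨y, x − y⟩/‖y‖₂ + ‖x − y‖₂²/(2‖y‖₂) holds. -/
open scoped InnerProductSpace

theorem norm_add_inner_sub_div_norm_add_norm_sub_sq_div_eq {E : Type*} [NormedAddCommGroup E]
    [InnerProductSpace ℝ E] (x : E) {y : E} (hy : y ≠ 0) :
    ‖y‖ + ⟪y, x - y⟫_ℝ / ‖y‖ + ‖x - y‖ ^ 2 / (2 * ‖y‖) =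
      ‖x‖ + (‖x‖ - ‖y‖) ^ 2 / (2 * ‖y‖) := by
  have hy' : ‖y‖ ≠ 0 := norm_ne_zero_iff.mpr hy
  have h_inner : ⟪y, x - y⟫_ℝ = ⟪x, y⟫_ℝ - ‖y‖ ^ 2 := by
    rw [inner_sub_right, real_inner_self_eq_norm_sq, real_inner_comm]
  rw [h_inner, norm_sub_sq_real]
  field_simp
  ring

theorem stmt0 (p : ℕ) (x y : EuclideanSpace ℝ (Fin p)) (hy : y ≠ 0) :
    ‖x‖ ≤ ‖y‖ + ⟪y, x - y⟫_ℝ / ‖y‖ + ‖x - y‖ ^ 2 / (2 * ‖y‖) := by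
  rw [norm_add_inner_sub_div_norm_add_norm_sub_sq_div_eq x hy]
  exact le_add_of_nonneg_right (by positivity)
end

section
/- Let a, b, z ∈ ℝ^p, λ₁, λ₂ ≥ 0, w₁, w₂ > 0, L > 0, and suppose a ≠ b. Then the point a minimizes g(β) = λ₁‖β‖₁ + λ₂w₁‖β − a‖₂ + λ₂w₂‖β − b‖₂ + (L/2)‖β − z‖₂² if and only if there exists u ∈ ∂‖·‖₁(a) such that ‖L(a − z) + λ₁u + λ₂w₂(a − b)/‖a − b‖₂‖₂ ≤ λ₂w₁. -/
/-!
If `a` minimizes `g`, then along every ray `t ↦ a + t • h` the one-sided derivative of `g` at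
`t = 0` is nonnegative: `λ₁ ∑ D_i(h_i) + ⟪r, h⟫ + λ₂w₁‖h‖ ≥ 0`, where `D_i` is the directional
derivative of `|·|` at `a_i` and `r = L(a - z) + λ₂w₂(a - b)/‖a - b‖` (here `a ≠ b` makes the far
term differentiable). Choose `u ∈ ∂‖·‖₁(a)` coordinatewise by soft thresholding, so that `u`
attains the directional derivative of `‖·‖₁` in the direction `h = -(r + λ₁u)`; the inequality
then reads `-‖r + λ₁u‖² + λ₂w₁‖r + λ₁u‖ ≥ 0`, i.e. `‖r + λ₁u‖ ≤ λ₂w₁`.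

Conversely, the subgradient inequalities of `‖·‖₁`, `‖· - b‖` and `‖· - z‖²` at `a` give
`g β ≥ g a + ⟪v, β - a⟫ + λ₂w₁‖β - a‖` with `v` the vector of the statement, and Cauchy–Schwarz
with `‖v‖ ≤ λ₂w₁` makes the last two terms nonnegative.
-/

open Set RealInnerProductSpace

theorem hasDerivWithinAt_norm_smul {F : Type*} [SeminormedAddCommGroup F] [NormedSpace ℝ F]
    (h : F) : HasDerivWithinAt (fun t : ℝ => ‖t • h‖) ‖h‖ (Ici 0) 0 := by
  have hlin : HasDerivWithinAt (fun t : ℝ => t * ‖h‖) ‖h‖ (Ici 0) 0 := by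
    simpa using ((hasDerivAt_id (0 : ℝ)).mul_const ‖h‖).hasDerivWithinAt
  refine hlin.congr (fun t ht => ?_) (by simp)
  rw [norm_smul, Real.norm_of_nonneg ht]

theorem HasDerivWithinAt.nonneg_of_forall_le {φ : ℝ → ℝ} {φ' a : ℝ}
    (hφ : HasDerivWithinAt φ φ' (Ici a) a) (hmin : ∀ t, a ≤ t → φ a ≤ φ t) : 0 ≤ φ' := by
  have hloc : IsLocalMinOn φ (Ici a) a :=
    (isMinOn_iff.mpr hmin).localize.on_subset le_rfl
  simpa using hloc.hasFDerivWithinAt_nonneg hφ.hasFDerivWithinAt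
    (mem_posTangentConeAt_of_segment_subset (by simp [segment_eq_Icc, Icc_subset_Ici_self]) :
      (1 : ℝ) ∈ posTangentConeAt (Ici a) a)

section InnerProductSpace

variable {F : Type*} [NormedAddCommGroup F] [InnerProductSpace ℝ F]

theorem inner_inv_norm_smul_sub_le (x y : F) : ⟪‖x‖⁻¹ • x, y - x⟫ ≤ ‖y‖ - ‖x‖ := by
  rcases eq_or_ne x 0 with rfl | hx
  · simp
  have hxpos : 0 < ‖x‖ := norm_pos_iff.mpr hx
  have hcs : ⟪x, y - x⟫ ≤ ‖x‖ * (‖y‖ - ‖x‖) := by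
    rw [inner_sub_right, real_inner_self_eq_norm_sq]
    linarith [real_inner_le_norm x y]
  rwa [real_inner_smul_left, inv_mul_le_iff₀ hxpos]

theorem norm_sq_add_two_inner_le (x y : F) : ‖x‖ ^ 2 + 2 * ⟪x, y - x⟫ ≤ ‖y‖ ^ 2 := by
  have h := norm_add_sq_real x (y - x)
  rw [add_sub_cancel] at h
  linarith [sq_nonneg ‖y - x‖]

theorem hasDerivAt_norm_add_smul {x : F} (hx : x ≠ 0) (h : F) :
    HasDerivAt (fun t : ℝ => ‖x + t • h‖) (⟪x, h⟫ / ‖x‖) 0 := by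
  have hline : HasDerivAt (fun t : ℝ => x + t • h) h 0 := by
    simpa using ((hasDerivAt_id (0 : ℝ)).smul_const h).const_add x
  have hsq := hline.norm_sq.sqrt (by simpa using hx)
  simp only [zero_smul, add_zero, Real.sqrt_sq (norm_nonneg _)] at hsq
  rwa [mul_div_mul_left _ _ two_ne_zero] at hsq

end InnerProductSpace

def IsAbsSubgradient (x u : ℝ) : Prop := (x ≠ 0 → u = Real.sign x) ∧ (x = 0 → |u| ≤ 1)

noncomputable def absDirDeriv (x h : ℝ) : ℝ := if x = 0 then |h| else Real.sign x * h

theorem IsAbsSubgradient.abs_add_mul_sub_le {x u : ℝ} (hu : IsAbsSubgradient x u) (y : ℝ) :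
    |x| + u * (y - x) ≤ |y| := by
  rcases lt_trichotomy x 0 with hx | rfl | hx
  · rw [hu.1 hx.ne, Real.sign_of_neg hx, abs_of_neg hx]
    linarith [neg_abs_le y]
  · have hy : |u * y| ≤ |y| := by
      rw [abs_mul]; exact mul_le_of_le_one_left (abs_nonneg y) (hu.2 rfl)
    simpa using (le_abs_self (u * y)).trans hy
  · rw [hu.1 hx.ne', Real.sign_of_pos hx, abs_of_pos hx]
    linarith [le_abs_self y]

theorem hasDerivWithinAt_abs_add_mul (x h : ℝ) :
    HasDerivWithinAt (fun t => |x + t * h|) (absDirDeriv x h) (Ici 0) 0 := by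
  have hline : HasDerivAt (fun t => x + t * h) h 0 := by
    simpa using ((hasDerivAt_id (0 : ℝ)).mul_const h).const_add x
  rcases lt_trichotomy x 0 with hx | rfl | hx
  · have hd := (hasDerivAt_abs_neg (by simpa using hx)).comp (0 : ℝ) hline
    exact (hd.congr_deriv (by simp [absDirDeriv, hx.ne, Real.sign_of_neg hx])).hasDerivWithinAt
  · simpa [absDirDeriv, mul_comm] using hasDerivWithinAt_norm_smul h
  · have hd := (hasDerivAt_abs_pos (by simpa using hx)).comp (0 : ℝ) hline
    exact (hd.congr_deriv (by simp [absDirDeriv, hx.ne', Real.sign_of_pos hx])).hasDerivWithinAt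

theorem exists_isAbsSubgradient_absDirDeriv_eq (x r : ℝ) {lam : ℝ} (hlam : 0 ≤ lam) :
    ∃ u, IsAbsSubgradient x u ∧
      lam * absDirDeriv x (-(r + lam * u)) = lam * u * -(r + lam * u) := by
  rcases eq_or_ne x 0 with rfl | hx
  swap
  · exact ⟨Real.sign x, ⟨fun _ => rfl, fun h => absurd h hx⟩, by simp [absDirDeriv, hx]; ring⟩
  simp only [IsAbsSubgradient, absDirDeriv, ne_eq, not_true_eq_false, IsEmpty.forall_iff,
    forall_const, true_and, if_true]
  rcases le_or_gt |r| lam with hr | hr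
  · rcases hlam.eq_or_lt with rfl | hlam
    · exact ⟨0, by simp⟩
    · refine ⟨-r / lam, ?_, ?_⟩
      · rw [abs_div, abs_neg, abs_of_pos hlam]; exact div_le_one_of_le₀ hr hlam.le
      · field_simp; simp
  · rcases lt_or_gt_of_ne (show r ≠ 0 by rintro rfl; simp at hr; linarith) with hr0 | hr0
    · refine ⟨1, by simp, ?_⟩
      rw [abs_of_neg hr0] at hr
      rw [abs_of_nonneg (by linarith)]; ring
    · refine ⟨-1, by simp, ?_⟩
      rw [abs_of_pos hr0] at hr
      rw [abs_of_nonpos (by linarith)]; ring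

section EuclideanSpace

variable {ι : Type*} [Fintype ι]

theorem sum_abs_add_inner_sub_le {a u : EuclideanSpace ℝ ι}
    (hu : ∀ i, IsAbsSubgradient (a i) (u i)) (β : EuclideanSpace ℝ ι) :
    ∑ i, |a i| + ⟪u, β - a⟫ ≤ ∑ i, |β i| := by
  simp only [PiLp.inner_apply, PiLp.sub_apply, RCLike.inner_apply, conj_trivial,
    ← Finset.sum_add_distrib]
  exact Finset.sum_le_sum fun i _ => by
    simpa [mul_comm] using (hu i).abs_add_mul_sub_le (β i)

theorem exists_isAbsSubgradient_norm_add_smul_le {a r : EuclideanSpace ℝ ι} {lam c : ℝ}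
    (hlam : 0 ≤ lam) (hc : 0 ≤ c)
    (hdir : ∀ h, 0 ≤ lam * ∑ i, absDirDeriv (a i) (h i) + ⟪r, h⟫ + c * ‖h‖) :
    ∃ u : EuclideanSpace ℝ ι, (∀ i, IsAbsSubgradient (a i) (u i)) ∧ ‖r + lam • u‖ ≤ c := by
  choose u hu hdd using fun i => exists_isAbsSubgradient_absDirDeriv_eq (a i) (r i) hlam
  set d : EuclideanSpace ℝ ι := r + lam • WithLp.toLp 2 u
  have hlin : lam * ∑ i, absDirDeriv (a i) ((-d) i) + ⟪r, -d⟫ = -‖d‖ ^ 2 := by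
    rw [← real_inner_self_eq_norm_sq, ← inner_neg_right, Finset.mul_sum]
    simp only [PiLp.inner_apply, RCLike.inner_apply, conj_trivial, ← Finset.sum_add_distrib]
    refine Finset.sum_congr rfl fun i _ => ?_
    have hdi : d i = r i + lam * u i := rfl
    rw [PiLp.neg_apply, hdi, hdd i]
    ring
  refine ⟨WithLp.toLp 2 u, hu, ?_⟩
  have := hdir (-d)
  rw [hlin, norm_neg] at this
  nlinarith [norm_nonneg d]

end EuclideanSpace

section PenalizedObjective

variable {ι : Type*} [Fintype ι] (lam1 lam2 w1 w2 L : ℝ) (a b z : EuclideanSpace ℝ ι)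

noncomputable def penalizedObjective (β : EuclideanSpace ℝ ι) : ℝ :=
  lam1 * (∑ i, |β i|) + lam2 * w1 * ‖β - a‖ + lam2 * w2 * ‖β - b‖ + (L / 2) * ‖β - z‖ ^ 2

theorem penalizedObjective_le_of_norm_le {u : EuclideanSpace ℝ ι} (hL : 0 ≤ L)
    (hlam1 : 0 ≤ lam1) (hw2 : 0 ≤ lam2 * w2) (hu : ∀ i, IsAbsSubgradient (a i) (u i))
    (hv : ‖L • (a - z) + lam1 • u + (lam2 * w2 / ‖a - b‖) • (a - b)‖ ≤ lam2 * w1)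
    (β : EuclideanSpace ℝ ι) :
    penalizedObjective lam1 lam2 w1 w2 L a b z a ≤
      penalizedObjective lam1 lam2 w1 w2 L a b z β := by
  set v := L • (a - z) + lam1 • u + (lam2 * w2 / ‖a - b‖) • (a - b)
  have hl1 := mul_le_mul_of_nonneg_left (sum_abs_add_inner_sub_le hu β) hlam1
  have hfar := mul_le_mul_of_nonneg_left (inner_inv_norm_smul_sub_le (a - b) (β - b)) hw2
  have hquad := mul_le_mul_of_nonneg_left (norm_sq_add_two_inner_le (a - z) (β - z)) hL
  have hball : -⟪v, β - a⟫ ≤ lam2 * w1 * ‖β - a‖ :=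
    (neg_le_abs _).trans ((abs_real_inner_le_norm v _).trans
      (mul_le_mul_of_nonneg_right hv (norm_nonneg _)))
  have hv_inner : ⟪v, β - a⟫ = L * ⟪a - z, β - a⟫ + lam1 * ⟪u, β - a⟫ +
      lam2 * w2 * ⟪‖a - b‖⁻¹ • (a - b), β - a⟫ := by
    simp only [v, inner_add_left, real_inner_smul_left, div_eq_mul_inv, mul_assoc]
  simp only [sub_sub_sub_cancel_right] at hfar hquad
  simp only [penalizedObjective, sub_self, norm_zero, mul_zero, add_zero]
  linarith

theorem hasDerivWithinAt_penalizedObjective (hab : a ≠ b) (h : EuclideanSpace ℝ ι) :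
    HasDerivWithinAt (fun t : ℝ => penalizedObjective lam1 lam2 w1 w2 L a b z (a + t • h))
      (lam1 * ∑ i, absDirDeriv (a i) (h i) + lam2 * w1 * ‖h‖ +
        lam2 * w2 * (⟪a - b, h⟫ / ‖a - b‖) + L / 2 * (2 * ⟪a - z, h⟫)) (Ici 0) 0 := by
  have hl1 : HasDerivWithinAt (fun t : ℝ => ∑ i, |(a + t • h) i|)
      (∑ i, absDirDeriv (a i) (h i)) (Ici 0) 0 := by
    simpa using HasDerivWithinAt.fun_sum fun i _ => hasDerivWithinAt_abs_add_mul (a i) (h i)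
  have hnear : HasDerivWithinAt (fun t : ℝ => ‖a + t • h - a‖) ‖h‖ (Ici 0) 0 := by
    simpa using hasDerivWithinAt_norm_smul h
  have hfar : HasDerivAt (fun t : ℝ => ‖a + t • h - b‖) (⟪a - b, h⟫ / ‖a - b‖) 0 := by
    simpa only [add_sub_right_comm] using hasDerivAt_norm_add_smul (sub_ne_zero.mpr hab) h
  have hquad : HasDerivAt (fun t : ℝ => ‖a + t • h - z‖ ^ 2) (2 * ⟪a - z, h⟫) 0 := by
    have hline : HasDerivAt (fun t : ℝ => a - z + t • h) h 0 := by
      simpa using ((hasDerivAt_id (0 : ℝ)).smul_const h).const_add (a - z)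
    simpa [add_sub_right_comm] using hline.norm_sq
  exact (((hl1.const_mul lam1).add (hnear.const_mul _)).add
    (hfar.hasDerivWithinAt.const_mul _)).add (hquad.hasDerivWithinAt.const_mul _)

theorem penalizedObjective_dirDeriv_nonneg (hab : a ≠ b)
    (hmin : ∀ β, penalizedObjective lam1 lam2 w1 w2 L a b z a ≤
      penalizedObjective lam1 lam2 w1 w2 L a b z β) (h : EuclideanSpace ℝ ι) :
    0 ≤ lam1 * ∑ i, absDirDeriv (a i) (h i) +
      ⟪L • (a - z) + (lam2 * w2 / ‖a - b‖) • (a - b), h⟫ + lam2 * w1 * ‖h‖ := by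
  have hderiv := hasDerivWithinAt_penalizedObjective lam1 lam2 w1 w2 L a b z hab h
  have := hderiv.nonneg_of_forall_le fun t _ => by simpa using hmin (a + t • h)
  rw [inner_add_left, real_inner_smul_left, real_inner_smul_left]
  linarith [show lam2 * w2 / ‖a - b‖ * ⟪a - b, h⟫ = lam2 * w2 * (⟪a - b, h⟫ / ‖a - b‖) by ring]

end PenalizedObjective

theorem stmt8 (p : ℕ) (L lam1 lam2 w1 w2 : ℝ) (hL : 0 < L) (h1 : 0 ≤ lam1)
    (h2 : 0 ≤ lam2) (hw1 : 0 < w1) (hw2 : 0 < w2)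
    (a b z : EuclideanSpace ℝ (Fin p)) (hab : a ≠ b) :
    (∀ β : EuclideanSpace ℝ (Fin p),
        lam1 * (∑ i, |a i|) + lam2 * w1 * ‖a - a‖ + lam2 * w2 * ‖a - b‖ +
            (L / 2) * ‖a - z‖ ^ 2 ≤
          lam1 * (∑ i, |β i|) + lam2 * w1 * ‖β - a‖ + lam2 * w2 * ‖β - b‖ +
            (L / 2) * ‖β - z‖ ^ 2) ↔
      ∃ u : EuclideanSpace ℝ (Fin p),
        (∀ i, (a i ≠ 0 → u i = Real.sign (a i)) ∧ (a i = 0 → |u i| ≤ 1)) ∧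
        ‖L • (a - z) + lam1 • u + (lam2 * w2 / ‖a - b‖) • (a - b)‖ ≤ lam2 * w1 := by
  constructor
  · intro hmin
    obtain ⟨u, hu, hnorm⟩ := exists_isAbsSubgradient_norm_add_smul_le h1
      (mul_nonneg h2 hw1.le) (penalizedObjective_dirDeriv_nonneg lam1 lam2 w1 w2 L a b z hab hmin)
    exact ⟨u, hu, by rwa [add_right_comm] at hnorm⟩
  · rintro ⟨u, hu, hv⟩
    exact penalizedObjective_le_of_norm_le lam1 lam2 w1 w2 L a b z hL.le h1
      (mul_nonneg h2 hw2.le) hu hv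
end
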